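/- Let M = {f_1,...,f_{4m+2}} ⊂ R^{2m+1} be as above, and let 0 < δ ≤ 1/10. Define P_δ = {θ ∈ R^{4m+2} : Σ_{i=4j+1}^{4j+4} θ_i = 2 for j = 0,...,m−1, θ_{4m+1}+θ_{4m+2} = 1, and |θ_i − 1/2| ≤ δ for all i}. Then P_δ is contained in the matroid polytope of M: for every θ ∈ P_δ and every S ⊆ M, Σ_{\{i : f_i ∈ S\}} θ_i ≤ rank(S), and Σ_{i=1}^{4m+2} θ_i = 2m+1. -/

import Mathlib

/-! Without its last element `v = e₀ - e₁ + ⋯ + e₂ₘ`, `M` is the graphic matroid of a fan: spokes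
`e u` and rims `e w - e (w + 1)` on the path `0, …, 2m`. The rims of `S` cut the path into classes
of consecutive vertices, and the rank of `S ∖ {v}` is the number of vertices less the number of
classes without a spoke (free classes). Since each block of four weights sums to `2` and every
weight is within `δ` of `1/2`, all elements of a class of `k` vertices weigh at most
`k - 1/2 + 3δ`, and its rims at most `(k - 1)(1/2 + δ)`; so `S ∖ {v}` satisfies the inequality with
a slack `1/2 - 3δ` for each class with a spoke and `1/2 - δ` for each rim of a free class.

Adding `v` raises the rank unless `v` is spanned, which forces every free class to have an even
number of vertices (`v` has coordinate sum `±1` on a run of odd length) and, as the path has an odd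
number of vertices, some class to contain a spoke. If there is no free class, `S` has full rank and
the total weight `2m + 1` is the bound. Otherwise a free class contains a rim, and the two slacks
add up to `1 - 4δ ≥ 1/2 + δ ≥ θ_v`. -/

open Finset

noncomputable def nbM (m : ℕ) (i : Fin (4*m+2)) : Fin (2*m+1) → ℝ :=
  if i.val = 4*m+1 then fun t => (-1 : ℝ) ^ (t : ℕ)
  else if i.val % 2 = 0 then
    fun t => if t.val = i.val / 2 then 1 else 0
  else
    fun t => if t.val = i.val / 2 then 1 else if t.val = i.val / 2 + 1 then -1 else 0

namespace FanMatroid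

open Module Submodule

/-! Elements of the fan are indexed as in `nbM`: `2 * u` is the spoke `e u` and `2 * w + 1` the
rim `e w - e (w + 1)`. For a set `s` of indices, a *class* is a maximal run of consecutive
vertices joined by rims of `s`; `IsCut s a` says that a class starts at `a`. -/

noncomputable def unitVec (n u : ℕ) : Fin n → ℝ := fun t => if (t : ℕ) = u then 1 else 0

noncomputable def fanVec (n k : ℕ) : Fin n → ℝ :=
  if k % 2 = 0 then unitVec n (k / 2) else unitVec n (k / 2) - unitVec n (k / 2 + 1)

noncomputable def altVec (n : ℕ) : Fin n → ℝ := fun t => (-1) ^ (t : ℕ)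

noncomputable def nbVec (m k : ℕ) : Fin (2 * m + 1) → ℝ :=
  if k = 4 * m + 1 then altVec (2 * m + 1) else fanVec (2 * m + 1) k

lemma fanVec_two_mul (n u : ℕ) : fanVec n (2 * u) = unitVec n u := by
  simp [fanVec]

lemma fanVec_two_mul_add_one (n w : ℕ) :
    fanVec n (2 * w + 1) = unitVec n w - unitVec n (w + 1) := by
  rw [fanVec, if_neg (by omega), show (2 * w + 1) / 2 = w by omega]

lemma unitVec_eq_single {n : ℕ} (t : Fin n) : unitVec n t = Pi.single t 1 := by
  funext t'
  simp [unitVec, Pi.single_apply, Fin.ext_iff]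

lemma nbM_eq_nbVec (m : ℕ) (i : Fin (4 * m + 2)) : nbM m i = nbVec m i := by
  unfold nbM nbVec altVec fanVec unitVec
  split_ifs <;>
    first | rfl | (funext t; simp only [Pi.sub_apply]; split_ifs <;> first | omega | norm_num)

section Classes

variable (s : Finset ℕ)

def IsCut (a : ℕ) : Prop := a = 0 ∨ 2 * a - 1 ∉ s

def IsSpokeStart (a : ℕ) : Prop :=
  IsCut s a ∧ ∃ t, a ≤ t ∧ 2 * t ∈ s ∧ ∀ w, a ≤ w → w < t → 2 * w + 1 ∈ s

def IsFreeStart (a : ℕ) : Prop := IsCut s a ∧ ¬ IsSpokeStart s a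

structure IsClass (α β : ℕ) : Prop where
  le : α ≤ β
  isCut : IsCut s α
  rim_notMem : 2 * β + 1 ∉ s
  rim_mem : ∀ w, α ≤ w → w < β → 2 * w + 1 ∈ s

variable {s}

lemma isCut_succ_iff {w : ℕ} : IsCut s (w + 1) ↔ 2 * w + 1 ∉ s := by
  simp [IsCut, show 2 * (w + 1) - 1 = 2 * w + 1 by omega]

lemma IsClass.not_isCut {α β u : ℕ} (h : IsClass s α β) (hαu : α < u) (huβ : u ≤ β) :
    ¬ IsCut s u := by
  obtain ⟨w, rfl⟩ : ∃ w, u = w + 1 := ⟨u - 1, by omega⟩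
  exact fun hu => isCut_succ_iff.mp hu (h.rim_mem w (by omega) (by omega))

lemma IsClass.eq_of_isCut {α β u : ℕ} (h : IsClass s α β) (hαu : α ≤ u) (huβ : u ≤ β)
    (hu : IsCut s u) : α = u := by
  by_contra hne
  exact h.not_isCut (lt_of_le_of_ne hαu hne) huβ hu

lemma IsClass.isSpokeStart_iff {α β : ℕ} (h : IsClass s α β) :
    IsSpokeStart s α ↔ ∃ t, α ≤ t ∧ t ≤ β ∧ 2 * t ∈ s := by
  constructor
  · rintro ⟨-, t, hαt, ht, hrims⟩
    refine ⟨t, hαt, ?_, ht⟩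
    by_contra! hβt
    exact h.rim_notMem (hrims β h.le hβt)
  · rintro ⟨t, hαt, htβ, ht⟩
    exact ⟨h.isCut, t, hαt, ht, fun w hαw hwt => h.rim_mem w hαw (by omega)⟩

open Classical in
lemma exists_isClass {u b : ℕ} (hub : u ≤ b) (hb : 2 * b + 1 ∉ s) :
    ∃ α β, α ≤ u ∧ u ≤ β ∧ β ≤ b ∧ IsClass s α β := by
  have hex : ∃ w, u ≤ w ∧ 2 * w + 1 ∉ s := ⟨b, hub, hb⟩
  refine ⟨Nat.findGreatest (IsCut s) u, Nat.find hex, Nat.findGreatest_le u,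
    (Nat.find_spec hex).1, Nat.find_min' hex ⟨hub, hb⟩, ?_⟩
  refine ⟨(Nat.findGreatest_le u).trans (Nat.find_spec hex).1,
    Nat.findGreatest_spec (Nat.zero_le u) (Or.inl rfl), (Nat.find_spec hex).2,
    fun w hαw hwβ => ?_⟩
  by_cases hwu : w < u
  · have := Nat.findGreatest_is_greatest (P := IsCut s) (k := w + 1) (n := u) (by omega) (by omega)
    simpa [isCut_succ_iff] using this
  · by_contra hw
    exact Nat.find_min hex hwβ ⟨by omega, hw⟩

end Classes

section Rank

variable {n : ℕ} (s : Finset ℕ)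

lemma unitVec_mem_span_of_rims {a t : ℕ} (hat : a ≤ t) (ht : 2 * t ∈ s)
    (hrims : ∀ w, a ≤ w → w < t → 2 * w + 1 ∈ s) :
    unitVec n a ∈ span ℝ (fanVec n '' s) := by
  obtain ⟨d, rfl⟩ := Nat.exists_eq_add_of_le hat
  induction d generalizing a with
  | zero => exact subset_span ⟨2 * a, by simpa using ht, fanVec_two_mul n a⟩
  | succ d ih =>
    have hstep : unitVec n a = fanVec n (2 * a + 1) + unitVec n (a + 1) := by
      rw [fanVec_two_mul_add_one]; abel
    rw [hstep]
    refine add_mem (subset_span ⟨2 * a + 1, hrims a le_rfl (by omega), rfl⟩) (ih (by omega) ?_ ?_)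
    · rwa [show a + 1 + d = a + (d + 1) by omega]
    · exact fun w h1 h2 => hrims w (by omega) (by omega)

open Classical in
/-- Every coordinate vector lies in the span of `s` together with the coordinate vectors of the
first vertices of the free classes. -/
lemma le_finrank_span_add_card :
    n ≤ finrank ℝ (span ℝ (fanVec n '' s)) + #{a ∈ range n | IsFreeStart s a} := by
  set F := {a ∈ range n | IsFreeStart s a}
  set W := span ℝ (fanVec n '' s)
  set U := span ℝ (↑(F.image (unitVec n)) : Set (Fin n → ℝ))
  have hcut : ∀ a < n, IsCut s a → unitVec n a ∈ W ⊔ U := by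
    intro a han hcut
    by_cases hspoke : IsSpokeStart s a
    · obtain ⟨-, t, hat, ht, hrims⟩ := hspoke
      exact mem_sup_left (unitVec_mem_span_of_rims s hat ht hrims)
    · refine mem_sup_right (subset_span ?_)
      simpa [F] using ⟨a, ⟨han, hcut, hspoke⟩, rfl⟩
  have hmem : ∀ u < n, unitVec n u ∈ W ⊔ U := by
    intro u hun
    induction u with
    | zero => exact hcut 0 hun (Or.inl rfl)
    | succ w ih =>
      by_cases hw : IsCut s (w + 1)
      · exact hcut _ hun hw
      have hrim : 2 * w + 1 ∈ s := by simpa [isCut_succ_iff] using hw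
      have hstep : unitVec n (w + 1) = unitVec n w - fanVec n (2 * w + 1) := by
        rw [fanVec_two_mul_add_one]; abel
      rw [hstep]
      exact sub_mem (ih (by omega)) (mem_sup_left (subset_span ⟨_, hrim, rfl⟩))
  have htop : ⊤ ≤ W ⊔ U := by
    rw [← (Pi.basisFun ℝ (Fin n)).span_eq, span_le]
    rintro _ ⟨t, rfl⟩
    rw [Pi.basisFun_apply, ← unitVec_eq_single]
    exact hmem t t.isLt
  calc n = finrank ℝ (⊤ : Submodule ℝ (Fin n → ℝ)) := by rw [finrank_top, finrank_fin_fun]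
    _ ≤ finrank ℝ (W ⊔ U : Submodule ℝ (Fin n → ℝ)) := finrank_mono htop
    _ ≤ finrank ℝ W + finrank ℝ U := finrank_add_le_finrank_add_finrank W U
    _ ≤ finrank ℝ W + #F := by
      gcongr
      exact (finrank_span_finset_le_card _).trans card_image_le

lemma finrank_span_add_one_le {V : Type*} [AddCommGroup V] [Module ℝ V] [FiniteDimensional ℝ V]
    {A : Set V} {v : V} (hv : v ∉ span ℝ A) :
    finrank ℝ (span ℝ A) + 1 ≤ finrank ℝ (span ℝ (insert v A)) := by
  refine finrank_lt_finrank_of_lt (lt_of_le_of_ne (span_mono (Set.subset_insert v A)) ?_)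
  intro heq
  exact hv (heq ▸ subset_span (Set.mem_insert v A))

end Rank

section Parity

variable {n : ℕ} {s : Finset ℕ}

lemma sum_filter_fin_eq_sum_Icc {α β : ℕ} (hβn : β < n) (g : ℕ → ℝ) :
    ∑ t ∈ univ.filter (fun t : Fin n => α ≤ (t : ℕ) ∧ (t : ℕ) ≤ β), g t
      = ∑ k ∈ Icc α β, g k := by
  rw [sum_filter, Fin.sum_univ_eq_sum_range (fun k => if α ≤ k ∧ k ≤ β then g k else 0),
    ← sum_filter]
  congr 1
  ext k
  simp only [mem_filter, mem_range, mem_Icc]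
  omega

lemma sum_coord_eq_zero_of_mem_span {α β : ℕ} (hα : IsCut s α) (hβ : 2 * β + 1 ∉ s)
    (hβn : β < n) (hspoke : ∀ t, α ≤ t → t ≤ β → 2 * t ∉ s) {x : Fin n → ℝ}
    (hx : x ∈ span ℝ (fanVec n '' s)) :
    ∑ t ∈ univ.filter (fun t : Fin n => α ≤ (t : ℕ) ∧ (t : ℕ) ≤ β), x t = 0 := by
  have hunit : ∀ u, ∑ t ∈ univ.filter (fun t : Fin n => α ≤ (t : ℕ) ∧ (t : ℕ) ≤ β),
      unitVec n u t = if α ≤ u ∧ u ≤ β then 1 else 0 := by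
    intro u
    simp only [unitVec]
    rw [sum_filter_fin_eq_sum_Icc hβn (fun k => if k = u then 1 else 0), sum_ite_eq']
    simp
  induction hx using span_induction with
  | mem x hx =>
    obtain ⟨k, hk, rfl⟩ := hx
    obtain ⟨u, rfl | rfl⟩ := Nat.even_or_odd' k
    · rw [fanVec_two_mul, hunit, if_neg]
      exact fun h => hspoke u h.1 h.2 hk
    · rw [fanVec_two_mul_add_one]
      simp only [Pi.sub_apply, sum_sub_distrib, hunit]
      have hα' : u + 1 ≠ α := by rintro rfl; exact isCut_succ_iff.mp hα hk
      have hβ' : u ≠ β := by rintro rfl; exact hβ hk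
      split_ifs <;> first | rfl | omega | norm_num
  | zero => simp
  | add x y _ _ hx hy => simp [sum_add_distrib, hx, hy]
  | smul a x _ hx => simp [← mul_sum, hx]

lemma sum_Icc_neg_one_pow (α d : ℕ) : ∑ u ∈ Icc α (α + 2 * d), (-1 : ℝ) ^ u = (-1) ^ α := by
  induction d with
  | zero => simp
  | succ d ih =>
    rw [show α + 2 * (d + 1) = α + 2 * d + 1 + 1 by ring, sum_Icc_succ_top (by omega),
      sum_Icc_succ_top (by omega), ih, pow_succ, pow_succ]
    ring

lemma odd_of_altVec_mem_span {α β : ℕ} (hα : IsCut s α) (hβ : 2 * β + 1 ∉ s) (hβn : β < n)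
    (hαβ : α ≤ β) (hspoke : ∀ t, α ≤ t → t ≤ β → 2 * t ∉ s)
    (halt : altVec n ∈ span ℝ (fanVec n '' s)) : Odd (β - α) := by
  by_contra hodd
  obtain ⟨d, hd⟩ := Nat.not_odd_iff_even.mp hodd
  have hzero := sum_coord_eq_zero_of_mem_span hα hβ hβn hspoke halt
  simp only [altVec] at hzero
  rw [sum_filter_fin_eq_sum_Icc hβn (fun k => (-1 : ℝ) ^ k), show β = α + 2 * d by omega,
    sum_Icc_neg_one_pow] at hzero
  exact pow_ne_zero α (by norm_num) hzero

end Parity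

/-- The conditions defining `P_δ`, for weights indexed by `ℕ`. -/
structure PDeltaWeights (m : ℕ) (δ : ℝ) (f : ℕ → ℝ) : Prop where
  abs_sub_le : ∀ k < 4 * m + 2, |f k - 1 / 2| ≤ δ
  block : ∀ j < m, f (4 * j) + f (4 * j + 1) + f (4 * j + 2) + f (4 * j + 3) = 2
  last : f (4 * m) + f (4 * m + 1) = 1

def pairSum (f : ℕ → ℝ) (u : ℕ) : ℝ := f (2 * u) + f (2 * u + 1)

lemma sum_range_pairSum (f : ℕ → ℝ) (N : ℕ) :
    ∑ u ∈ range N, pairSum f u = ∑ k ∈ range (2 * N), f k := by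
  induction N with
  | zero => simp
  | succ N ih =>
    rw [sum_range_succ, ih, show 2 * (N + 1) = 2 * N + 1 + 1 by ring, sum_range_succ,
      sum_range_succ, pairSum, add_assoc]

namespace PDeltaWeights

variable {m : ℕ} {δ : ℝ} {f : ℕ → ℝ} {s : Finset ℕ}

lemma le_add (hf : PDeltaWeights m δ f) {k : ℕ} (hk : k < 4 * m + 2) : f k ≤ 1 / 2 + δ := by
  linarith [(abs_le.mp (hf.abs_sub_le k hk)).2]

lemma sub_le (hf : PDeltaWeights m δ f) {k : ℕ} (hk : k < 4 * m + 2) : 1 / 2 - δ ≤ f k := by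
  linarith [(abs_le.mp (hf.abs_sub_le k hk)).1]

lemma nonneg (hf : PDeltaWeights m δ f) (hδ : δ ≤ 1 / 2) {k : ℕ} (hk : k < 4 * m + 2) :
    0 ≤ f k := by
  linarith [hf.sub_le hk]

lemma indicator_le (hf : PDeltaWeights m δ f) (hδ : δ ≤ 1 / 2) {k : ℕ} (hk : k < 4 * m + 2) :
    (s : Set ℕ).indicator f k ≤ f k := by
  rw [Set.indicator_apply]
  split_ifs
  exacts [le_rfl, hf.nonneg hδ hk]

lemma indicator_le_add (hf : PDeltaWeights m δ f) {k : ℕ} (hk : k < 4 * m + 2) :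
    (s : Set ℕ).indicator f k ≤ 1 / 2 + δ := by
  rw [Set.indicator_apply]
  split_ifs
  exacts [hf.le_add hk, by linarith [hf.le_add hk, hf.sub_le hk]]

lemma sum_range_pairSum_two_mul (hf : PDeltaWeights m δ f) {j : ℕ} (hj : j ≤ m) :
    ∑ u ∈ range (2 * j), pairSum f u = 2 * j := by
  induction j with
  | zero => simp
  | succ j ih =>
    rw [show 2 * (j + 1) = 2 * j + 1 + 1 by ring, sum_range_succ, sum_range_succ, ih (by omega)]
    simp only [pairSum, show 2 * (2 * j) = 4 * j by ring,
      show 2 * (2 * j + 1) = 4 * j + 2 by ring]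
    push_cast
    linarith [hf.block j (by omega)]

lemma sum_range (hf : PDeltaWeights m δ f) : ∑ k ∈ range (4 * m + 2), f k = 2 * m + 1 := by
  rw [show 4 * m + 2 = 2 * (2 * m + 1) by ring, ← sum_range_pairSum, sum_range_succ,
    hf.sum_range_pairSum_two_mul le_rfl, pairSum, show 2 * (2 * m) = 4 * m by ring, hf.last]

lemma le_sum_range_pairSum (hf : PDeltaWeights m δ f) {a : ℕ} (ha : a ≤ 2 * m) :
    a - 2 * δ ≤ ∑ u ∈ range a, pairSum f u := by
  obtain ⟨j, rfl | rfl⟩ := Nat.even_or_odd' a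
  · rw [hf.sum_range_pairSum_two_mul (by omega)]
    push_cast
    linarith [hf.le_add (k := 0) (by omega), hf.sub_le (k := 0) (by omega)]
  · rw [sum_range_succ, hf.sum_range_pairSum_two_mul (by omega), pairSum,
      show 2 * (2 * j) = 4 * j by ring]
    push_cast
    linarith [hf.sub_le (k := 4 * j) (by omega), hf.sub_le (k := 4 * j + 1) (by omega)]

lemma sum_range_pairSum_sub_le (hf : PDeltaWeights m δ f) {b : ℕ} (hb : b ≤ 2 * m) :
    ∑ u ∈ range (b + 1), pairSum f u - f (2 * b + 1) ≤ b + 1 / 2 + δ := by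
  obtain ⟨j, rfl | rfl⟩ := Nat.even_or_odd' b
  · rw [sum_range_succ, hf.sum_range_pairSum_two_mul (by omega), pairSum,
      show 2 * (2 * j) = 4 * j by ring]
    push_cast
    linarith [hf.le_add (k := 4 * j) (by omega)]
  · rw [show 2 * j + 1 + 1 = 2 * (j + 1) by ring, hf.sum_range_pairSum_two_mul (by omega),
      show 2 * (2 * j + 1) + 1 = 4 * j + 3 by ring]
    push_cast
    linarith [hf.sub_le (k := 4 * j + 3) (by omega)]

end PDeltaWeights

section Budget

variable {m : ℕ} {δ : ℝ} {f : ℕ → ℝ} {s : Finset ℕ}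

open Classical in
/-- A class of `k` vertices has rank `k` if it contains a spoke and `k - 1` otherwise. The budget
spreads this rank over the vertices of the class, less a slack `1 / 2 - 3 * δ` on a class with a
spoke, putting the corrections on its first vertex. -/
noncomputable def budget (s : Finset ℕ) (δ : ℝ) (u : ℕ) : ℝ :=
  1 - (if IsFreeStart s u then 1 else 0) - (1 / 2 - 3 * δ) * (if IsSpokeStart s u then 1 else 0)

lemma IsClass.sum_budget {α β : ℕ} (h : IsClass s α β) :
    ∑ u ∈ Ico α (β + 1), budget s δ u = budget s δ α + (β - α) := by
  rw [sum_eq_sum_Ico_succ_bot (by linarith [h.le]), sum_congr rfl (g := fun _ => (1 : ℝ))]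
  · rw [sum_const, Nat.card_Ico, nsmul_eq_mul, mul_one, Nat.cast_sub (by linarith [h.le])]
    push_cast
    ring
  · intro u hu
    rw [mem_Ico] at hu
    have hcut := h.not_isCut (u := u) (by omega) (by omega)
    simp [budget, IsFreeStart, IsSpokeStart, hcut]

lemma IsClass.sum_pairSum_le (hf : PDeltaWeights m δ f) (hδ : δ ≤ 1 / 2) {α β : ℕ}
    (h : IsClass s α β) (hβ : β ≤ 2 * m) :
    ∑ u ∈ Ico α (β + 1), pairSum ((s : Set ℕ).indicator f) u ≤ β - α + 1 / 2 + 3 * δ := by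
  have hpair : ∀ u ∈ Ico α β, pairSum ((s : Set ℕ).indicator f) u ≤ pairSum f u := by
    intro u hu
    rw [mem_Ico] at hu
    exact add_le_add (hf.indicator_le hδ (by omega)) (hf.indicator_le hδ (by omega))
  have hlast : (s : Set ℕ).indicator f (2 * β + 1) = 0 := Set.indicator_of_notMem h.rim_notMem f
  calc ∑ u ∈ Ico α (β + 1), pairSum ((s : Set ℕ).indicator f) u
      ≤ ∑ u ∈ Ico α β, pairSum f u + f (2 * β) := by
        rw [sum_Ico_succ_top h.le, pairSum, hlast, add_zero]
        exact add_le_add (sum_le_sum hpair) (hf.indicator_le hδ (by omega))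
    _ = (∑ u ∈ range (β + 1), pairSum f u - f (2 * β + 1)) - ∑ u ∈ range α, pairSum f u := by
        rw [sum_range_succ, ← sum_range_add_sum_Ico _ h.le, pairSum]
        ring
    _ ≤ β + 1 / 2 + δ - (α - 2 * δ) :=
        sub_le_sub (hf.sum_range_pairSum_sub_le hβ) (hf.le_sum_range_pairSum (by linarith [h.le]))
    _ = β - α + 1 / 2 + 3 * δ := by ring

lemma IsClass.sum_pairSum_le_of_not_isSpokeStart (hf : PDeltaWeights m δ f) {α β : ℕ}
    (h : IsClass s α β) (hα : ¬ IsSpokeStart s α) (hβ : β ≤ 2 * m) :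
    ∑ u ∈ Ico α (β + 1), pairSum ((s : Set ℕ).indicator f) u ≤ (β - α) * (1 / 2 + δ) := by
  have hspoke : ∀ u ∈ Ico α (β + 1), (s : Set ℕ).indicator f (2 * u) = 0 := by
    intro u hu
    rw [mem_Ico] at hu
    exact Set.indicator_of_notMem
      (fun hu' => hα (h.isSpokeStart_iff.mpr ⟨u, by omega, by omega, hu'⟩)) f
  have hlast : (s : Set ℕ).indicator f (2 * β + 1) = 0 := Set.indicator_of_notMem h.rim_notMem f
  rw [sum_Ico_succ_top h.le, pairSum, hspoke β (by simp [h.le]), hlast, add_zero, add_zero]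
  calc ∑ u ∈ Ico α β, pairSum ((s : Set ℕ).indicator f) u
      ≤ ∑ _u ∈ Ico α β, (1 / 2 + δ) := by
        refine sum_le_sum fun u hu => ?_
        rw [pairSum, hspoke u (by simp at hu ⊢; omega), zero_add]
        exact hf.indicator_le_add (by simp at hu; omega)
    _ = (β - α) * (1 / 2 + δ) := by
        rw [sum_const, Nat.card_Ico, nsmul_eq_mul, Nat.cast_sub h.le]

lemma IsClass.sum_pairSum_le_sum_budget (hf : PDeltaWeights m δ f) (hδ : δ ≤ 1 / 2) {α β : ℕ}
    (h : IsClass s α β) (hβ : β ≤ 2 * m) :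
    ∑ u ∈ Ico α (β + 1), pairSum ((s : Set ℕ).indicator f) u
      ≤ ∑ u ∈ Ico α (β + 1), budget s δ u := by
  have hαβ : (α : ℝ) ≤ β := by exact_mod_cast h.le
  rw [h.sum_budget]
  by_cases hα : IsSpokeStart s α
  · have hbudget : budget s δ α = 1 / 2 + 3 * δ := by simp [budget, IsFreeStart, hα]; ring
    linarith [h.sum_pairSum_le hf hδ hβ]
  · have hbudget : budget s δ α = 0 := by simp [budget, IsFreeStart, hα, h.isCut]
    nlinarith [h.sum_pairSum_le_of_not_isSpokeStart hf hα hβ]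

lemma sum_pairSum_le_sum_budget (hf : PDeltaWeights m δ f) (hδ : δ ≤ 1 / 2) {a b : ℕ}
    (ha : IsCut s a) (hb : IsCut s b) (hab : a ≤ b) (hbm : b ≤ 2 * m + 1) :
    ∑ u ∈ Ico a b, pairSum ((s : Set ℕ).indicator f) u ≤ ∑ u ∈ Ico a b, budget s δ u := by
  induction b using Nat.strong_induction_on with
  | _ b ih =>
  rcases hab.eq_or_lt with rfl | hab
  · simp
  obtain ⟨c, rfl⟩ : ∃ c, b = c + 1 := ⟨b - 1, by omega⟩
  obtain ⟨α, β, hα, hβ, hβc, hclass⟩ := exists_isClass le_rfl (isCut_succ_iff.mp hb)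
  obtain rfl : β = c := by omega
  have haα : a ≤ α := by
    by_contra! hαa
    exact hclass.not_isCut hαa (by omega) ha
  rw [← sum_Ico_consecutive _ haα hα.step, ← sum_Ico_consecutive _ haα hα.step]
  exact add_le_add (ih α (by omega) hclass.isCut haα (by omega))
    (hclass.sum_pairSum_le_sum_budget hf hδ (by omega))

lemma sum_pairSum_le_sum_budget_sub (hf : PDeltaWeights m δ f) (hδ : δ ≤ 1 / 2)
    (hs : 4 * m + 1 ∉ s) {α β : ℕ} (h : IsClass s α β) (hα : ¬ IsSpokeStart s α)
    (hβ : β ≤ 2 * m) :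
    ∑ u ∈ range (2 * m + 1), pairSum ((s : Set ℕ).indicator f) u
      ≤ ∑ u ∈ range (2 * m + 1), budget s δ u - (β - α) * (1 / 2 - δ) := by
  have hαβ := h.le
  have hsplit : ∀ g : ℕ → ℝ, ∑ u ∈ range (2 * m + 1), g u = ∑ u ∈ Ico 0 α, g u
      + ∑ u ∈ Ico α (β + 1), g u + ∑ u ∈ Ico (β + 1) (2 * m + 1), g u := by
    intro g
    rw [sum_Ico_consecutive g (Nat.zero_le α) (show α ≤ β + 1 by omega),
      sum_Ico_consecutive g (Nat.zero_le _) (show β + 1 ≤ 2 * m + 1 by omega), range_eq_Ico]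
  have hbudget : ∑ u ∈ Ico α (β + 1), budget s δ u = β - α := by
    rw [h.sum_budget]
    simp [budget, IsFreeStart, hα, h.isCut]
  have hlast : IsCut s (2 * m + 1) :=
    isCut_succ_iff.mpr (by rwa [show 2 * (2 * m) + 1 = 4 * m + 1 by ring])
  rw [hsplit, hsplit, hbudget]
  linarith [sum_pairSum_le_sum_budget hf hδ (Or.inl rfl) h.isCut (Nat.zero_le α) (by omega),
    h.sum_pairSum_le_of_not_isSpokeStart hf hα hβ,
    sum_pairSum_le_sum_budget hf hδ (isCut_succ_iff.mpr h.rim_notMem) hlast (by omega) le_rfl]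

open Classical in
lemma sum_budget_le_finrank (n : ℕ) (s : Finset ℕ) (δ : ℝ) :
    ∑ u ∈ range n, budget s δ u ≤ finrank ℝ (span ℝ (fanVec n '' s))
      - (1 / 2 - 3 * δ) * #{a ∈ range n | IsSpokeStart s a} := by
  have hrank : (n : ℝ) ≤ finrank ℝ (span ℝ (fanVec n '' s)) + #{a ∈ range n | IsFreeStart s a} := by
    exact_mod_cast le_finrank_span_add_card s
  simp only [budget, sum_sub_distrib, ← mul_sum, sum_boole, sum_const, card_range, nsmul_eq_mul,
    mul_one]
  linarith

lemma sum_eq_sum_pairSum_indicator {N : ℕ} (hs : ∀ k ∈ s, k < 2 * N) (f : ℕ → ℝ) :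
    ∑ k ∈ s, f k = ∑ u ∈ range N, pairSum ((s : Set ℕ).indicator f) u := by
  rw [sum_range_pairSum, sum_indicator_subset f (fun k hk => mem_range.mpr (hs k hk))]

open Classical in
lemma sum_le_finrank_span_sub (hf : PDeltaWeights m δ f) (hδ : δ ≤ 1 / 2)
    (hs : ∀ k ∈ s, k < 4 * m + 1) :
    ∑ k ∈ s, f k ≤ finrank ℝ (span ℝ (fanVec (2 * m + 1) '' s))
      - (1 / 2 - 3 * δ) * #{a ∈ range (2 * m + 1) | IsSpokeStart s a} := by
  have hlast : IsCut s (2 * m + 1) :=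
    isCut_succ_iff.mpr fun h => by linarith [hs _ h]
  rw [sum_eq_sum_pairSum_indicator (N := 2 * m + 1) (fun k hk => by linarith [hs k hk])]
  calc ∑ u ∈ range (2 * m + 1), pairSum ((s : Set ℕ).indicator f) u
      ≤ ∑ u ∈ range (2 * m + 1), budget s δ u := by
        rw [range_eq_Ico]
        exact sum_pairSum_le_sum_budget hf hδ (Or.inl rfl) hlast (Nat.zero_le _) le_rfl
    _ ≤ _ := sum_budget_le_finrank _ s δ

end Budget

section Slack

variable {m : ℕ} {δ : ℝ} {f : ℕ → ℝ} {s : Finset ℕ}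

open Classical in
lemma one_le_card_isSpokeStart (hs : ∀ k ∈ s, k < 4 * m + 1)
    (halt : altVec (2 * m + 1) ∈ span ℝ (fanVec (2 * m + 1) '' s)) :
    1 ≤ #{a ∈ range (2 * m + 1) | IsSpokeStart s a} := by
  have hlast : 2 * (2 * m) + 1 ∉ s := fun h => by linarith [hs _ h]
  obtain ⟨t, ht, hts⟩ : ∃ t, t ≤ 2 * m ∧ 2 * t ∈ s := by
    by_contra! hno
    have := odd_of_altVec_mem_span (Or.inl rfl) hlast (by omega) (Nat.zero_le _)
      (fun t _ ht => hno t ht) halt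
    rw [Nat.odd_iff] at this
    omega
  obtain ⟨α, β, hαt, htβ, -, hclass⟩ := exists_isClass ht hlast
  refine card_pos.mpr ⟨α, mem_filter.mpr ⟨mem_range.mpr (by omega), ?_⟩⟩
  exact hclass.isSpokeStart_iff.mpr ⟨t, hαt, htβ, hts⟩

lemma sum_add_le_finrank_span_of_forall_not_isFreeStart (hf : PDeltaWeights m δ f)
    (hδ : δ ≤ 1 / 2) (hs : ∀ k ∈ s, k < 4 * m + 1)
    (hfree : ∀ α < 2 * m + 1, ¬ IsFreeStart s α) :
    ∑ k ∈ s, f k + f (4 * m + 1) ≤ finrank ℝ (span ℝ (fanVec (2 * m + 1) '' s)) := by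
  classical
  have hrank := le_finrank_span_add_card (n := 2 * m + 1) s
  rw [filter_false_of_mem (fun a ha => hfree a (mem_range.mp ha)), card_empty, add_zero] at hrank
  have htotal : ∑ k ∈ insert (4 * m + 1) s, f k ≤ ∑ k ∈ range (4 * m + 2), f k := by
    refine sum_le_sum_of_subset_of_nonneg (fun k hk => mem_range.mpr ?_)
      (fun k hk _ => hf.nonneg hδ (mem_range.mp hk))
    rcases mem_insert.mp hk with rfl | hk
    · omega
    · linarith [hs k hk]
  rw [sum_insert (fun h => by linarith [hs _ h]), hf.sum_range] at htotal
  have : ((2 * m + 1 : ℕ) : ℝ) ≤ finrank ℝ (span ℝ (fanVec (2 * m + 1) '' s)) := by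
    exact_mod_cast hrank
  push_cast at this
  linarith

/-- When `altVec` is spanned by the rest, a free class (with an even number of vertices, hence a
rim) and a class with a spoke together leave a slack of `1 - 4 * δ ≥ 1 / 2 + δ`. -/
lemma sum_add_le_finrank_span_of_altVec_mem (hf : PDeltaWeights m δ f) (hδ : δ ≤ 1 / 10)
    (hs : ∀ k ∈ s, k < 4 * m + 1)
    (halt : altVec (2 * m + 1) ∈ span ℝ (fanVec (2 * m + 1) '' s)) :
    ∑ k ∈ s, f k + f (4 * m + 1) ≤ finrank ℝ (span ℝ (fanVec (2 * m + 1) '' s)) := by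
  classical
  by_cases hfree : ∀ α < 2 * m + 1, ¬ IsFreeStart s α
  · exact sum_add_le_finrank_span_of_forall_not_isFreeStart hf (by linarith) hs hfree
  push Not at hfree
  obtain ⟨α, hαn, hαcut, hα⟩ := hfree
  have hs' : 4 * m + 1 ∉ s := fun h => by linarith [hs _ h]
  obtain ⟨α', β, hα', hαβ, hβ, hclass⟩ :=
    exists_isClass (s := s) (u := α) (b := 2 * m) (by omega)
      (by rwa [show 2 * (2 * m) + 1 = 4 * m + 1 by ring])
  obtain rfl := (hclass.eq_of_isCut hα' hαβ hαcut).symm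
  have hodd := odd_of_altVec_mem_span hclass.isCut hclass.rim_notMem (by omega) hclass.le
    (fun t h1 h2 ht => hα (hclass.isSpokeStart_iff.mpr ⟨t, h1, h2, ht⟩)) halt
  have hlen : (1 : ℝ) ≤ β - α := by
    rw [← Nat.cast_sub hαβ]
    exact_mod_cast hodd.pos
  have hJ : (1 : ℝ) ≤ #{a ∈ range (2 * m + 1) | IsSpokeStart s a} := by
    exact_mod_cast one_le_card_isSpokeStart hs halt
  have hweight := sum_pairSum_le_sum_budget_sub hf (by linarith) hs' hclass hα hβ
  rw [← sum_eq_sum_pairSum_indicator (fun k hk => by linarith [hs k hk])] at hweight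
  have hslack₁ : 1 / 2 - 3 * δ
      ≤ (1 / 2 - 3 * δ) * #{a ∈ range (2 * m + 1) | IsSpokeStart s a} := by nlinarith
  have hslack₂ : 1 / 2 - δ ≤ (β - α) * (1 / 2 - δ) := by nlinarith
  linarith [sum_budget_le_finrank (2 * m + 1) s δ, hf.le_add (k := 4 * m + 1) (by omega)]

open Classical in
lemma sum_add_le_finrank_span_insert (hf : PDeltaWeights m δ f) (hδ : δ ≤ 1 / 10)
    (hs : ∀ k ∈ s, k < 4 * m + 1) :
    ∑ k ∈ s, f k + f (4 * m + 1)
      ≤ finrank ℝ (span ℝ (insert (altVec (2 * m + 1)) (fanVec (2 * m + 1) '' s))) := by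
  by_cases halt : altVec (2 * m + 1) ∈ span ℝ (fanVec (2 * m + 1) '' s)
  · rw [span_insert_eq_span halt]
    exact sum_add_le_finrank_span_of_altVec_mem hf hδ hs halt
  · have hrank : (finrank ℝ (span ℝ (fanVec (2 * m + 1) '' s)) : ℝ) + 1 ≤
        finrank ℝ (span ℝ (insert (altVec (2 * m + 1)) (fanVec (2 * m + 1) '' s))) := by
      exact_mod_cast finrank_span_add_one_le halt
    have hJ : (0 : ℝ) ≤ (1 / 2 - 3 * δ) * #{a ∈ range (2 * m + 1) | IsSpokeStart s a} :=
      mul_nonneg (by linarith) (Nat.cast_nonneg _)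
    linarith [sum_le_finrank_span_sub hf (by linarith) hs, hf.le_add (k := 4 * m + 1) (by omega)]

open Classical in
lemma sum_le_finrank_span_nbVec (hf : PDeltaWeights m δ f) (hδ : δ ≤ 1 / 10)
    (hs : ∀ k ∈ s, k < 4 * m + 2) :
    ∑ k ∈ s, f k ≤ finrank ℝ (span ℝ (nbVec m '' s)) := by
  have hfan : ∀ t : Finset ℕ, 4 * m + 1 ∉ t → nbVec m '' t = fanVec (2 * m + 1) '' t := by
    intro t ht
    refine Set.image_congr fun k hk => ?_
    rw [nbVec, if_neg (by rintro rfl; exact ht hk)]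
  by_cases hv : 4 * m + 1 ∈ s
  · have hs' : ∀ k ∈ s.erase (4 * m + 1), k < 4 * m + 1 := fun k hk => by
      have := hs k (mem_of_mem_erase hk)
      have := ne_of_mem_erase hk
      omega
    rw [← insert_erase hv, sum_insert (notMem_erase _ _), coe_insert, Set.image_insert_eq,
      hfan _ (notMem_erase _ _), add_comm, nbVec, if_pos rfl]
    exact sum_add_le_finrank_span_insert hf hδ hs'
  · have hs' : ∀ k ∈ s, k < 4 * m + 1 := fun k hk => by
      have := hs k hk
      have : k ≠ 4 * m + 1 := by rintro rfl; exact hv hk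
      omega
    have hJ : (0 : ℝ) ≤ (1 / 2 - 3 * δ) * #{a ∈ range (2 * m + 1) | IsSpokeStart s a} :=
      mul_nonneg (by linarith) (Nat.cast_nonneg _)
    rw [hfan s hv]
    linarith [sum_le_finrank_span_sub hf (by linarith) hs']

end Slack

end FanMatroid

open FanMatroid in
/-- for `0 < δ ≤ 1/10`, `P_δ` is contained in the matroid polytope of `M`. -/
theorem stmt7 (m : ℕ) (δ : ℝ) (hδ : δ ≤ 1/10)
    (θ : Fin (4*m+2) → ℝ)
    (hnear : ∀ i, |θ i - 1/2| ≤ δ)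
    (hblock : ∀ (j : ℕ) (hj : j < m), θ ⟨4*j, by omega⟩ + θ ⟨4*j+1, by omega⟩
        + θ ⟨4*j+2, by omega⟩ + θ ⟨4*j+3, by omega⟩ = 2)
    (hlast : θ ⟨4*m, by omega⟩ + θ ⟨4*m+1, by omega⟩ = 1) :
    (∑ i, θ i = 2*m+1) ∧
    ∀ S : Finset (Fin (4*m+2)),
      ∑ i ∈ S, θ i ≤
        (Module.finrank ℝ (Submodule.span ℝ (nbM m '' (S : Set (Fin (4*m+2))))) : ℝ) := by
  set f : ℕ → ℝ := fun k => if h : k < 4 * m + 2 then θ ⟨k, h⟩ else 0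
  have hfθ : ∀ k (hk : k < 4 * m + 2), f k = θ ⟨k, hk⟩ := fun k hk => dif_pos hk
  have hf : PDeltaWeights m δ f :=
    { abs_sub_le := fun k hk => by rw [hfθ k hk]; exact hnear _
      block := fun j hj => by
        rw [hfθ _ (by omega), hfθ _ (by omega), hfθ _ (by omega), hfθ _ (by omega)]
        exact hblock j hj
      last := by rw [hfθ _ (by omega), hfθ _ (by omega)]; exact hlast }
  have hsum : ∀ S : Finset (Fin (4 * m + 2)), ∑ i ∈ S, θ i = ∑ k ∈ S.image Fin.val, f k := by
    intro S
    rw [sum_image (fun i _ j _ h => Fin.ext h)]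
    exact sum_congr rfl fun i _ => (hfθ i i.isLt).symm
  refine ⟨?_, fun S => ?_⟩
  · rw [← hf.sum_range, ← Fin.sum_univ_eq_sum_range]
    exact sum_congr rfl fun i _ => (hfθ i i.isLt).symm
  · have himage : nbM m '' (S : Set (Fin (4 * m + 2))) = nbVec m '' (S.image Fin.val : Set ℕ) := by
      rw [coe_image, Set.image_image]
      exact Set.image_congr fun i _ => nbM_eq_nbVec m i
    rw [hsum, himage]
    exact sum_le_finrank_span_nbVec hf hδ (by simp)
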